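/- arXiv:2103.16331 — 4 statements merged into one kernel-verified Lean document; each statement's English description precedes it below -/
import Mathlib

section
/- Let (Z_k)_{k≥0} be a Galton–Watson process with offspring distribution D satisfying μ = E[D] > 1 and E[e^{aD}] < ∞ for some a > 0, Z_0 = 1, and let W_k = μ^{−k} Z_k. If W = lim_k W_k (which exists a.s. by the martingale convergence theorem), then there exists a_* > 0 such that E[e^{a_* W}] < ∞. -/
/-!
Conditioning on the first `k` generations gives `E[e^{s Z_{k+1}}] = E[φ(s)^{Z_k}]` with
`φ(s) = E[e^{sD}]`. Since `(e^y - 1 - y) / y²` is increasing on `[0, ∞)`,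
`φ(s) ≤ 1 + μ s + b s² ≤ e^{τ(s)}` with `b = E[e^{aD}] / a²` and `τ(s) = μ s + b s²` for
`0 ≤ s ≤ a`, so `E[e^{s Z_n}] ≤ e^{τ^[n](s)}` as long as the iterates stay in `[0, a]`.
Starting from `s = c μ^{-n}`, the iterates satisfy `τ^[j](s) ≤ r (1 + r / c)` with
`r = c μ^{j-n}` once `4 b c ≤ μ (μ - 1)`; hence `E[e^{c W_n}] ≤ e^{2c}` for every `n`, and
Fatou's lemma passes this bound to `W`.
-/

open MeasureTheory ProbabilityTheory Filter
open scoped ENNReal Nat Topology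

theorem Real.hasSum_exp_sub_one_sub (x : ℝ) :
    HasSum (fun n => x ^ (n + 2) / (n + 2)!) (Real.exp x - 1 - x) := by
  have h := (hasSum_nat_add_iff' 2).2 (NormedSpace.expSeries_div_hasSum_exp (𝔸 := ℝ) x)
  rw [← Real.exp_eq_exp_ℝ] at h
  simpa [Finset.sum_range_succ, sub_sub] using h

theorem Real.exp_mul_sub_one_sub_le {t x : ℝ} (ht₀ : 0 ≤ t) (ht₁ : t ≤ 1) (hx : 0 ≤ x) :
    Real.exp (t * x) - 1 - t * x ≤ t ^ 2 * (Real.exp x - 1 - x) := by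
  refine hasSum_le (fun n => ?_) (Real.hasSum_exp_sub_one_sub (t * x))
    ((Real.hasSum_exp_sub_one_sub x).mul_left (t ^ 2))
  have htn : t ^ n ≤ 1 := pow_le_one₀ ht₀ ht₁
  rw [mul_pow, pow_add t n 2, mul_div_assoc, mul_comm (t ^ n), mul_assoc]
  exact mul_le_mul_of_nonneg_left (mul_le_of_le_one_left (by positivity) htn) (by positivity)

theorem lintegral_ofReal_exp_mul_le {Ω : Type*} {mΩ : MeasurableSpace Ω} {P : Measure Ω}
    [IsProbabilityMeasure P] {X : Ω → ℝ} (hX : AEMeasurable X P) (hX₀ : ∀ ω, 0 ≤ X ω)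
    {a s : ℝ} (ha : 0 < a) (hs₀ : 0 ≤ s) (hsa : s ≤ a)
    (hint : Integrable (fun ω => Real.exp (a * X ω)) P) :
    ∫⁻ ω, ENNReal.ofReal (Real.exp (s * X ω)) ∂P ≤ ENNReal.ofReal
      (Real.exp ((∫ ω, X ω ∂P) * s + (∫ ω, Real.exp (a * X ω) ∂P) / a ^ 2 * s ^ 2)) := by
  have hpointwise (x : ℝ) (hx : 0 ≤ x) :
      Real.exp (s * x) ≤ 1 + s * x + (s / a) ^ 2 * Real.exp (a * x) := by
    have h := Real.exp_mul_sub_one_sub_le (div_nonneg hs₀ ha.le) ((div_le_one ha).2 hsa)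
      (mul_nonneg ha.le hx)
    rw [show s / a * (a * x) = s * x by field_simp] at h
    have : 0 ≤ (s / a) ^ 2 * (1 + a * x) := by positivity
    nlinarith
  have hXint : Integrable X P := by
    refine (hint.const_mul a⁻¹).mono' hX.aestronglyMeasurable (ae_of_all _ fun ω => ?_)
    rw [Real.norm_of_nonneg (hX₀ ω), inv_mul_eq_div, le_div_iff₀ ha, mul_comm]
    linarith [Real.add_one_le_exp (a * X ω)]
  have hbound_int : Integrable (fun ω => 1 + s * X ω + (s / a) ^ 2 * Real.exp (a * X ω)) P :=
    ((integrable_const 1).add (hXint.const_mul s)).add (hint.const_mul _)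
  calc ∫⁻ ω, ENNReal.ofReal (Real.exp (s * X ω)) ∂P
      ≤ ∫⁻ ω, ENNReal.ofReal (1 + s * X ω + (s / a) ^ 2 * Real.exp (a * X ω)) ∂P :=
        lintegral_mono fun ω => ENNReal.ofReal_le_ofReal (hpointwise _ (hX₀ ω))
    _ = ENNReal.ofReal (1 + (∫ ω, X ω ∂P) * s + (∫ ω, Real.exp (a * X ω) ∂P) / a ^ 2 * s ^ 2) := by
        rw [← ofReal_integral_eq_lintegral_ofReal hbound_int
          (ae_of_all _ fun ω => by have := hX₀ ω; positivity),
          integral_add (f := fun ω => 1 + s * X ω)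
            ((integrable_const 1).add (hXint.const_mul s)) (hint.const_mul _),
          integral_add (integrable_const 1) (hXint.const_mul s)]
        simp only [integral_const, probReal_univ, smul_eq_mul, one_mul, integral_const_mul]
        ring_nf
    _ ≤ _ := ENNReal.ofReal_le_ofReal (Real.add_one_le_exp _ |>.trans_eq' (by ring))

theorem iterate_quadratic_le {μ b c : ℝ} (hμ : 1 ≤ μ) (hb : 0 ≤ b) (hc : 0 < c)
    (hbc : 4 * b * c ≤ μ * (μ - 1)) {x : ℝ} (hx : 0 ≤ x) {j : ℕ} (hj : μ ^ j * x ≤ c) :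
    0 ≤ (fun s => μ * s + b * s ^ 2)^[j] x ∧
      (fun s => μ * s + b * s ^ 2)^[j] x ≤ μ ^ j * x * (1 + μ ^ j * x / c) := by
  induction j with
  | zero =>
    simp only [Function.iterate_zero_apply, pow_zero, one_mul]
    exact ⟨hx, le_mul_of_one_le_right hx (le_add_of_nonneg_right (div_nonneg hx hc.le))⟩
  | succ j ih =>
    set r := μ ^ j * x
    have hr₀ : 0 ≤ r := mul_nonneg (pow_nonneg (zero_le_one.trans hμ) j) hx
    rw [pow_succ', mul_assoc] at hj
    obtain ⟨ht₀, ht⟩ := ih ((le_mul_of_one_le_left hr₀ hμ).trans hj)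
    rw [Function.iterate_succ_apply']
    set t := (fun s => μ * s + b * s ^ 2)^[j] x
    refine ⟨by positivity, ?_⟩
    have hrc : r ≤ c := (le_mul_of_one_le_left hr₀ hμ).trans hj
    have ht₂ : t ≤ 2 * r := ht.trans (by rw [two_mul]; nlinarith [(div_le_one hc).2 hrc])
    have hsq : b * t ^ 2 ≤ 4 * b * r ^ 2 := by nlinarith [mul_le_mul ht₂ ht₂ ht₀ (by positivity)]
    have hμbc : μ * r ^ 2 + 4 * b * c * r ^ 2 ≤ μ ^ 2 * r ^ 2 := by nlinarith [sq_nonneg r]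
    calc μ * t + b * t ^ 2 ≤ μ * (r * (1 + r / c)) + 4 * b * r ^ 2 := by gcongr
      _ = μ * r + (μ * r ^ 2 + 4 * b * c * r ^ 2) / c := by field_simp; ring
      _ ≤ μ * r + μ ^ 2 * r ^ 2 / c := by gcongr
      _ = μ ^ (j + 1) * x * (1 + μ ^ (j + 1) * x / c) := by ring

theorem iterate_quadratic_le_two_mul {μ b c : ℝ} (hμ : 1 ≤ μ) (hb : 0 ≤ b) (hc : 0 < c)
    (hbc : 4 * b * c ≤ μ * (μ - 1)) {j n : ℕ} (hjn : j ≤ n) :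
    0 ≤ (fun s => μ * s + b * s ^ 2)^[j] (c / μ ^ n) ∧
      (fun s => μ * s + b * s ^ 2)^[j] (c / μ ^ n) ≤ 2 * c := by
  have hμn : 0 < μ ^ n := pow_pos (zero_lt_one.trans_le hμ) n
  have hr : μ ^ j * (c / μ ^ n) ≤ c := by
    rw [mul_div_assoc', div_le_iff₀ hμn, mul_comm c]
    exact mul_le_mul_of_nonneg_right (pow_le_pow_right₀ hμ hjn) hc.le
  obtain ⟨h₀, h⟩ := iterate_quadratic_le hμ hb hc hbc (div_nonneg hc.le hμn.le) hr
  have hr₀ : 0 ≤ μ ^ j * (c / μ ^ n) := by positivity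
  refine ⟨h₀, h.trans ?_⟩
  nlinarith [(div_le_one hc).2 hr]

theorem exists_iterate_quadratic_le {μ b c₀ : ℝ} (hμ : 1 < μ) (hb : 0 ≤ b) (hc₀ : 0 < c₀) :
    ∃ c ∈ Set.Ioc 0 c₀, ∀ {j n : ℕ}, j ≤ n →
      0 ≤ (fun s => μ * s + b * s ^ 2)^[j] (c / μ ^ n) ∧
        (fun s => μ * s + b * s ^ 2)^[j] (c / μ ^ n) ≤ 2 * c := by
  have hμμ : 0 < μ * (μ - 1) := mul_pos (by linarith) (by linarith)
  set c := min c₀ (μ * (μ - 1) / (4 * b + 1))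
  have hc : 0 < c := lt_min hc₀ (by positivity)
  have hbc : 4 * b * c ≤ μ * (μ - 1) :=
    calc 4 * b * c ≤ (4 * b + 1) * (μ * (μ - 1) / (4 * b + 1)) := by
          gcongr
          · linarith
          · exact min_le_right _ _
      _ = μ * (μ - 1) := by field_simp
  exact ⟨c, ⟨hc, min_le_left _ _⟩, fun hjn => iterate_quadratic_le_two_mul hμ.le hb hc hbc hjn⟩

theorem Measurable.apply_of_nat {Ω β : Type*} {m : MeasurableSpace Ω} [MeasurableSpace β]
    {N : Ω → ℕ} (hN : Measurable N) {G : ℕ → Ω → β} (hG : ∀ n, Measurable (G n)) :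
    Measurable fun ω => G (N ω) ω :=
  (measurable_from_prod_countable_right (f := fun p : ℕ × Ω => G p.1 p.2) hG).comp
    (hN.prodMk measurable_id)

theorem lintegral_eq_tsum_setLIntegral_preimage {Ω : Type*} {mΩ : MeasurableSpace Ω}
    {P : Measure Ω} {N : Ω → ℕ} (hN : Measurable N) (f : Ω → ℝ≥0∞) :
    ∫⁻ ω, f ω ∂P = ∑' n, ∫⁻ ω in N ⁻¹' {n}, f ω ∂P := by
  rw [← lintegral_iUnion (fun n => hN (measurableSet_singleton n)) (pairwise_disjoint_fiber N),
    ← Set.preimage_iUnion, Set.iUnion_of_singleton, Set.preimage_univ, Measure.restrict_univ]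

theorem lintegral_apply_eq_of_indep {Ω : Type*} {m₁ m₂ mΩ : MeasurableSpace Ω} {P : Measure Ω}
    (h₁ : m₁ ≤ mΩ) (h₂ : m₂ ≤ mΩ) (hind : Indep m₁ m₂ P) {N : Ω → ℕ} (hN : Measurable[m₁] N)
    {G : ℕ → Ω → ℝ≥0∞} (hG : ∀ n, Measurable[m₂] (G n)) :
    ∫⁻ ω, G (N ω) ω ∂P = ∫⁻ ω, ∫⁻ ω', G (N ω) ω' ∂P ∂P := by
  have hN' : Measurable N := hN.mono h₁ le_rfl
  rw [lintegral_eq_tsum_setLIntegral_preimage hN', lintegral_eq_tsum_setLIntegral_preimage hN']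
  refine tsum_congr fun n => ?_
  have hs : MeasurableSet (N ⁻¹' {n}) := hN' (measurableSet_singleton n)
  have hfreeze (F : ℕ → Ω → ℝ≥0∞) :
      ∫⁻ ω in N ⁻¹' {n}, F (N ω) ω ∂P = ∫⁻ ω in N ⁻¹' {n}, F n ω ∂P :=
    setLIntegral_congr_fun hs fun ω hω => by rw [Set.mem_preimage.1 hω]
  rw [hfreeze G, hfreeze fun n _ => ∫⁻ ω', G n ω' ∂P, setLIntegral_const,
    ← lintegral_indicator hs, ← lintegral_indicator_one hs, mul_comm,
    ← lintegral_mul_eq_lintegral_mul_lintegral_of_independent_measurableSpace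
      (f := (N ⁻¹' {n}).indicator 1) h₁ h₂ hind
      (measurable_const.indicator (hN (measurableSet_singleton n))) (hG n)]
  congr with ω
  by_cases hω : ω ∈ N ⁻¹' {n} <;> simp [hω]


theorem integrable_of_tendsto_ae_of_lintegral_enorm_le {Ω E : Type*} {mΩ : MeasurableSpace Ω}
    {P : Measure Ω} [NormedAddCommGroup E] {f : ℕ → Ω → E} {g : Ω → E} {C : ℝ≥0∞}
    (hf : ∀ n, AEStronglyMeasurable (f n) P)
    (hlim : ∀ᵐ ω ∂P, Tendsto (fun n => f n ω) atTop (𝓝 (g ω)))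
    (hC : ∀ n, ∫⁻ ω, ‖f n ω‖ₑ ∂P ≤ C) (hC_lt : C < ∞) : Integrable g P := by
  refine ⟨aestronglyMeasurable_of_tendsto_ae atTop hf hlim, ?_⟩
  have hfatou := Lp.eLpNorm_lim_le_liminf_eLpNorm (p := 1) hf g hlim
  simp only [eLpNorm_one_eq_lintegral_enorm] at hfatou
  exact hfatou.trans_lt ((liminf_le_of_frequently_le' (Frequently.of_forall hC)).trans_lt hC_lt)

abbrev generatedBy {Ω ι α : Type*} [MeasurableSpace α] (X : ι → Ω → α) (S : Set ι) :
    MeasurableSpace Ω :=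
  ⨆ i ∈ S, MeasurableSpace.comap (X i) inferInstance

section generatedBy

variable {Ω ι α : Type*} [MeasurableSpace α] {X : ι → Ω → α}

theorem generatedBy_le {mΩ : MeasurableSpace Ω} (hX : ∀ i, Measurable (X i)) (S : Set ι) :
    generatedBy X S ≤ mΩ :=
  iSup₂_le fun i _ => (hX i).comap_le

theorem measurable_generatedBy {S : Set ι} {i : ι} (hi : i ∈ S) :
    Measurable[generatedBy X S] (X i) :=
  Measurable.of_comap_le (le_iSup₂ (f := fun i (_ : i ∈ S) => MeasurableSpace.comap (X i) _) i hi)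

theorem generatedBy_mono {S T : Set ι} (h : S ⊆ T) : generatedBy X S ≤ generatedBy X T :=
  biSup_mono h

theorem indep_generatedBy {mΩ : MeasurableSpace Ω} {P : Measure Ω} (hX : ∀ i, Measurable (X i))
    (hindep : iIndepFun X P) {S T : Set ι} (hST : Disjoint S T) :
    Indep (generatedBy X S) (generatedBy X T) P :=
  indep_iSup_of_disjoint (fun i => (hX i).comap_le) hindep hST

end generatedBy

namespace GaltonWatson

variable {Ω : Type*} {D : ℕ × ℕ → Ω → ℕ} {Z : ℕ → Ω → ℕ}

theorem measurable_generatedBy_lt (hZ0 : ∀ ω, Z 0 ω = 1)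
    (hZrec : ∀ k ω, Z (k + 1) ω = ∑ i ∈ Finset.range (Z k ω), D (k, i) ω) (k : ℕ) :
    Measurable[generatedBy D {p | p.1 < k}] (Z k) := by
  induction k with
  | zero => simp only [funext hZ0, measurable_const]
  | succ k ih =>
    simp only [funext (hZrec k)]
    refine Measurable.apply_of_nat (G := fun n ω => ∑ i ∈ Finset.range n, D (k, i) ω)
      (ih.mono (generatedBy_mono fun p (hp : p.1 < k) => Nat.lt_succ_of_lt hp) le_rfl)
      fun n => Finset.measurable_sum _ fun i _ => measurable_generatedBy (Nat.lt_succ_self k)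

variable [MeasureSpace Ω]

theorem lintegral_prod_row (hDmeas : ∀ p, Measurable (D p))
    (hident : ∀ p, Measure.map (D p) ℙ = Measure.map (D (0, 0)) ℙ)
    (hindep : iIndepFun D ℙ) (F : ℕ → ℝ≥0∞) (k n : ℕ) :
    ∫⁻ ω, ∏ i ∈ Finset.range n, F (D (k, i) ω) = (∫⁻ ω, F (D (0, 0) ω)) ^ n := by
  have hrow : iIndepFun (fun i => F ∘ D (k, i)) ℙ :=
    (hindep.precomp (g := fun i => (k, i)) fun _ _ h => (Prod.mk.inj h).2).comp _
      fun _ => measurable_of_countable F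
  rw [lintegral_prod_eq_prod_lintegral_of_indepFun _ (fun i ω => F (D (k, i) ω)) hrow
    fun i => (measurable_of_countable F).comp (hDmeas (k, i))]
  have hsame (p : ℕ × ℕ) : ∫⁻ ω, F (D p ω) = ∫⁻ ω, F (D (0, 0) ω) := by
    rw [← lintegral_map (measurable_of_countable F) (hDmeas _), hident,
      lintegral_map (measurable_of_countable F) (hDmeas _)]
  simp only [hsame, Finset.prod_const, Finset.card_range]

theorem lintegral_prod_offspring (hDmeas : ∀ p, Measurable (D p))
    (hident : ∀ p, Measure.map (D p) ℙ = Measure.map (D (0, 0)) ℙ)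
    (hindep : iIndepFun D ℙ) (hZ0 : ∀ ω, Z 0 ω = 1)
    (hZrec : ∀ k ω, Z (k + 1) ω = ∑ i ∈ Finset.range (Z k ω), D (k, i) ω) (F : ℕ → ℝ≥0∞)
    (k : ℕ) :
    ∫⁻ ω, ∏ i ∈ Finset.range (Z k ω), F (D (k, i) ω) = ∫⁻ ω, (∫⁻ ω', F (D (0, 0) ω')) ^ Z k ω := by
  have hdisj : Disjoint {p : ℕ × ℕ | p.1 < k} {p | p.1 = k} :=
    Set.disjoint_left.2 fun p (hp : p.1 < k) (hp' : p.1 = k) => hp.ne hp'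
  rw [lintegral_apply_eq_of_indep (generatedBy_le hDmeas _) (generatedBy_le hDmeas _)
    (indep_generatedBy hDmeas hindep hdisj) (measurable_generatedBy_lt hZ0 hZrec k)
    (G := fun n ω => ∏ i ∈ Finset.range n, F (D (k, i) ω))
    fun n => Finset.measurable_prod _ fun i _ =>
      (measurable_of_countable F).comp (measurable_generatedBy rfl)]
  simp only [lintegral_prod_row hDmeas hident hindep]

theorem lintegral_exp_mul_le_iterate [IsProbabilityMeasure (ℙ : Measure Ω)]
    (hDmeas : ∀ p, Measurable (D p))
    (hident : ∀ p, Measure.map (D p) ℙ = Measure.map (D (0, 0)) ℙ)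
    (hindep : iIndepFun D ℙ) (hZ0 : ∀ ω, Z 0 ω = 1)
    (hZrec : ∀ k ω, Z (k + 1) ω = ∑ i ∈ Finset.range (Z k ω), D (k, i) ω)
    {τ : ℝ → ℝ} {S : Set ℝ}
    (hφ : ∀ s ∈ S, ∫⁻ ω, ENNReal.ofReal (Real.exp (s * D (0, 0) ω)) ≤
      ENNReal.ofReal (Real.exp (τ s)))
    (n : ℕ) {s : ℝ} (hs : ∀ i < n, τ^[i] s ∈ S) :
    ∫⁻ ω, ENNReal.ofReal (Real.exp (s * Z n ω)) ≤ ENNReal.ofReal (Real.exp (τ^[n] s)) := by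
  induction n generalizing s with
  | zero => simp [hZ0]
  | succ n ih =>
    have hpow (t : ℝ) (m : ℕ) :
        ENNReal.ofReal (Real.exp (t * m)) = ENNReal.ofReal (Real.exp t) ^ m := by
      rw [← ENNReal.ofReal_pow (Real.exp_nonneg _), ← Real.exp_nat_mul, mul_comm]
    have hprod (ω : Ω) : ENNReal.ofReal (Real.exp (s * Z (n + 1) ω)) =
        ∏ i ∈ Finset.range (Z n ω), ENNReal.ofReal (Real.exp (s * D (n, i) ω)) := by
      rw [hZrec, Nat.cast_sum, Finset.mul_sum, Real.exp_sum,
        ENNReal.ofReal_prod_of_nonneg fun _ _ => Real.exp_nonneg _]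
    calc ∫⁻ ω, ENNReal.ofReal (Real.exp (s * Z (n + 1) ω))
        = ∫⁻ ω, (∫⁻ ω', ENNReal.ofReal (Real.exp (s * D (0, 0) ω'))) ^ Z n ω := by
          simp only [hprod]
          exact lintegral_prod_offspring hDmeas hident hindep hZ0 hZrec
            (fun m => ENNReal.ofReal (Real.exp (s * m))) n
      _ ≤ ∫⁻ ω, ENNReal.ofReal (Real.exp (τ s * Z n ω)) :=
          lintegral_mono fun ω => by
            rw [hpow]; exact pow_le_pow_left' (hφ s (hs 0 n.succ_pos)) _
      _ ≤ ENNReal.ofReal (Real.exp (τ^[n] (τ s))) :=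
          ih fun i hi => Function.iterate_succ_apply τ i s ▸ hs (i + 1) (by omega)
      _ = ENNReal.ofReal (Real.exp (τ^[n + 1] s)) := by rw [Function.iterate_succ_apply]

end GaltonWatson

theorem gw_limit_exponential_moment_general {Ω : Type*} [MeasureSpace Ω]
    [IsProbabilityMeasure (ℙ : Measure Ω)]
    (D : ℕ × ℕ → Ω → ℕ) (hDmeas : ∀ p, Measurable (D p))
    (hident : ∀ p, Measure.map (D p) ℙ = Measure.map (D (0, 0)) ℙ)
    (hindep : iIndepFun D ℙ)
    (μ : ℝ) (hμdef : μ = ∫ ω, (D (0, 0) ω : ℝ)) (hμ1 : 1 < μ)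
    (ha : ∃ a > 0, Integrable (fun ω => Real.exp (a * (D (0, 0) ω : ℝ))))
    (Z : ℕ → Ω → ℕ) (hZ0 : ∀ ω, Z 0 ω = 1)
    (hZrec : ∀ k ω, Z (k + 1) ω = ∑ i ∈ Finset.range (Z k ω), D (k, i) ω)
    (W : Ω → ℝ)
    (hW : ∀ᵐ ω, Tendsto (fun k : ℕ => (μ ^ k)⁻¹ * (Z k ω : ℝ)) atTop (nhds (W ω))) :
    ∃ astar > 0, Integrable (fun ω => Real.exp (astar * W ω)) := by
  obtain ⟨a, ha, hint⟩ := ha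
  set b := (∫ ω, Real.exp (a * D (0, 0) ω)) / a ^ 2
  have hb : 0 ≤ b := by positivity
  have hφ (s : ℝ) (hs : s ∈ Set.Icc 0 a) : ∫⁻ ω, ENNReal.ofReal (Real.exp (s * D (0, 0) ω)) ≤
      ENNReal.ofReal (Real.exp (μ * s + b * s ^ 2)) := by
    rw [hμdef]
    exact lintegral_ofReal_exp_mul_le (measurable_from_top.comp (hDmeas _)).aemeasurable
      (fun ω => Nat.cast_nonneg _) ha hs.1 hs.2 hint
  obtain ⟨c, ⟨hc, hca⟩, hiter⟩ := exists_iterate_quadratic_le hμ1 hb (half_pos ha)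
  have hmoment (n : ℕ) :
      ∫⁻ ω, ‖Real.exp (c * ((μ ^ n)⁻¹ * Z n ω))‖ₑ ≤ ENNReal.ofReal (Real.exp (2 * c)) := by
    calc ∫⁻ ω, ‖Real.exp (c * ((μ ^ n)⁻¹ * Z n ω))‖ₑ
        = ∫⁻ ω, ENNReal.ofReal (Real.exp (c / μ ^ n * Z n ω)) := by
          simp only [Real.enorm_eq_ofReal (Real.exp_nonneg _), div_eq_mul_inv, mul_assoc]
      _ ≤ ENNReal.ofReal (Real.exp ((fun s => μ * s + b * s ^ 2)^[n] (c / μ ^ n))) :=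
          GaltonWatson.lintegral_exp_mul_le_iterate hDmeas hident hindep hZ0 hZrec hφ n
            fun i hi => ⟨(hiter hi.le).1, by linarith [(hiter hi.le).2]⟩
      _ ≤ ENNReal.ofReal (Real.exp (2 * c)) :=
          ENNReal.ofReal_le_ofReal (Real.exp_le_exp.2 (hiter le_rfl).2)
  have hZmeas (n : ℕ) : Measurable (Z n) :=
    (GaltonWatson.measurable_generatedBy_lt hZ0 hZrec n).mono (generatedBy_le hDmeas _) le_rfl
  refine ⟨c, hc, integrable_of_tendsto_ae_of_lintegral_enorm_le (fun n => by fun_prop)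
    (hW.mono fun ω h => (Real.continuous_exp.tendsto _).comp (h.const_mul c))
    hmoment ENNReal.ofReal_lt_top⟩

/-- for a Galton–Watson process `Z_{k+1} = Σ_{i<Z_k} D_{k,i}` with i.i.d.
offspring `D` of mean `μ > 1`, finite exponential moment `E[e^{aD}] < ∞` for some `a > 0`,
`Z_0 = 1`, and a.s. limit `W` of the normalized martingale `W_k = μ^{−k} Z_k`, there exists
`a_* > 0` such that `E[e^{a_* W}] < ∞`. -/
theorem gw_limit_exponential_moment {Ω : Type*} [MeasureSpace Ω]
    [IsProbabilityMeasure (ℙ : Measure Ω)]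
    (D : ℕ × ℕ → Ω → ℕ) (hDmeas : ∀ p, Measurable (D p))
    (hident : ∀ p, Measure.map (D p) ℙ = Measure.map (D (0, 0)) ℙ)
    (hindep : iIndepFun D ℙ)
    (μ : ℝ) (hμdef : μ = ∫ ω, (D (0, 0) ω : ℝ)) (hμ1 : 1 < μ)
    (ha : ∃ a > 0, Integrable (fun ω => Real.exp (a * (D (0, 0) ω : ℝ))))
    (Z : ℕ → Ω → ℕ) (hZ0 : ∀ ω, Z 0 ω = 1)
    (hZrec : ∀ k ω, Z (k + 1) ω = ∑ i ∈ Finset.range (Z k ω), D (k, i) ω)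
    (W : Ω → ℝ) (hWmeas : Measurable W)
    (hW : ∀ᵐ ω, Tendsto (fun k : ℕ => (μ ^ k)⁻¹ * (Z k ω : ℝ)) atTop (nhds (W ω))) :
    ∃ astar > 0, Integrable (fun ω => Real.exp (astar * W ω)) :=
  gw_limit_exponential_moment_general D hDmeas hident hindep μ hμdef hμ1 ha Z hZ0 hZrec W hW
end

section
/- Resolvent mass bound: let Λ be a finite subset of a graph G, ξ : Λ → ℝ a potential, let λ_Λ be the principal Dirichlet eigenvalue of Δ_G + ξ on Λ, and let γ > λ_Λ. If u(x) = E_x[exp(∫_0^{τ_{Λᶜ}} (ξ(X_s) − γ) ds)] where τ_{Λᶜ} is the exit time of Λ by the continuous-time random walk X, and ξ − γ ≤ K on Λ with K ≥ 0, then u(x) ≤ 1 + K|Λ|/(γ − λ_Λ) for all x ∈ Λ. -/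
open Finset

/-- The quadratic form `⟨(Δ_G + ξ)φ, φ⟩` for `φ` supported in the finite set `Λ`. -/
noncomputable def quadForm {V : Type*} (G : SimpleGraph V) [∀ v, Fintype (G.neighborSet v)]
    (ξ : V → ℝ) (Λ : Finset V) (φ : V → ℝ) : ℝ :=
  ∑ x ∈ Λ, ((∑ y ∈ G.neighborFinset x, (φ y - φ x)) + ξ x * φ x) * φ x

/-- The principal Dirichlet eigenvalue `λ_Λ(ξ)` of `Δ_G + ξ` on `Λ`. -/
noncomputable def lamSup {V : Type*} (G : SimpleGraph V) [∀ v, Fintype (G.neighborSet v)]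
    (ξ : V → ℝ) (Λ : Finset V) : ℝ :=
  sSup { r : ℝ | ∃ φ : V → ℝ, (∀ x ∉ Λ, φ x = 0) ∧ (∑ x ∈ Λ, (φ x) ^ 2) = 1 ∧
    r = quadForm G ξ Λ φ }

lemma bddAbove_quad {V : Type*} (G : SimpleGraph V) [∀ v, Fintype (G.neighborSet v)]
    (ξ : V → ℝ) (Λ : Finset V) :
    BddAbove { r : ℝ | ∃ φ : V → ℝ, (∀ x ∉ Λ, φ x = 0) ∧ (∑ x ∈ Λ, (φ x) ^ 2) = 1 ∧
      r = quadForm G ξ Λ φ } := by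
  refine ⟨∑ x ∈ Λ, (2 * ((G.neighborFinset x).card : ℝ) + |ξ x|), ?_⟩
  rintro r ⟨φ, h0, hn, rfl⟩
  have habs : ∀ x, |φ x| ≤ 1 := by
    intro x
    by_cases hx : x ∈ Λ
    · have h1 : φ x ^ 2 ≤ 1 := hn ▸ Finset.single_le_sum (fun i _ => sq_nonneg (φ i)) hx
      exact (sq_le_one_iff_abs_le_one (φ x)).mp h1
    · simp [h0 x hx]
  unfold quadForm
  refine Finset.sum_le_sum fun x _ => ?_
  have hD : |∑ y ∈ G.neighborFinset x, (φ y - φ x)| ≤ 2 * ((G.neighborFinset x).card : ℝ) := by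
    calc |∑ y ∈ G.neighborFinset x, (φ y - φ x)| ≤ ∑ y ∈ G.neighborFinset x, |φ y - φ x| :=
          Finset.abs_sum_le_sum_abs _ _
      _ ≤ ∑ y ∈ G.neighborFinset x, 2 := Finset.sum_le_sum fun y _ => by
          calc |φ y - φ x| ≤ |φ y| + |φ x| := abs_sub _ _
            _ ≤ 1 + 1 := add_le_add (habs y) (habs x)
            _ = 2 := by norm_num
      _ = 2 * ((G.neighborFinset x).card : ℝ) := by rw [Finset.sum_const]; push_cast; ring
  calc ((∑ y ∈ G.neighborFinset x, (φ y - φ x)) + ξ x * φ x) * φ x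
      ≤ |((∑ y ∈ G.neighborFinset x, (φ y - φ x)) + ξ x * φ x) * φ x| := le_abs_self _
    _ = |(∑ y ∈ G.neighborFinset x, (φ y - φ x)) + ξ x * φ x| * |φ x| := abs_mul _ _
    _ ≤ (|∑ y ∈ G.neighborFinset x, (φ y - φ x)| + |ξ x| * |φ x|) * 1 := by
        refine mul_le_mul ?_ (habs x) (abs_nonneg _) ?_
        · calc |(∑ y ∈ G.neighborFinset x, (φ y - φ x)) + ξ x * φ x|
              ≤ |∑ y ∈ G.neighborFinset x, (φ y - φ x)| + |ξ x * φ x| := abs_add_le _ _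
            _ = |∑ y ∈ G.neighborFinset x, (φ y - φ x)| + |ξ x| * |φ x| := by rw [abs_mul]
        · positivity
    _ ≤ 2 * ((G.neighborFinset x).card : ℝ) + |ξ x| := by
        have h1 : |ξ x| * |φ x| ≤ |ξ x| * 1 :=
          mul_le_mul_of_nonneg_left (habs x) (abs_nonneg _)
        nlinarith [hD]

lemma quadForm_le {V : Type*} (G : SimpleGraph V) [∀ v, Fintype (G.neighborSet v)]
    (ξ : V → ℝ) (Λ : Finset V) (ψ : V → ℝ) (h0 : ∀ x ∉ Λ, ψ x = 0) :
    quadForm G ξ Λ ψ ≤ lamSup G ξ Λ * ∑ x ∈ Λ, ψ x ^ 2 := by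
  set S := ∑ x ∈ Λ, ψ x ^ 2 with hS
  have hSnn : 0 ≤ S := Finset.sum_nonneg fun i _ => sq_nonneg _
  rcases hSnn.eq_or_lt with h | hSpos
  · have hz : ∀ x, ψ x = 0 := by
      intro x
      by_cases hx : x ∈ Λ
      · have := (Finset.sum_eq_zero_iff_of_nonneg (fun i _ => sq_nonneg (ψ i))).mp h.symm x hx
        exact pow_eq_zero_iff (n := 2) (by norm_num) |>.mp this
      · exact h0 x hx
    simp [quadForm, hz, ← h]
  · set c := (Real.sqrt S)⁻¹ with hc
    have hsq : Real.sqrt S > 0 := Real.sqrt_pos.mpr hSpos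
    have hc2 : c ^ 2 = S⁻¹ := by
      rw [hc, inv_pow, Real.sq_sqrt hSnn]
    have hscale : quadForm G ξ Λ (fun x => c * ψ x) = c ^ 2 * quadForm G ξ Λ ψ := by
      unfold quadForm
      rw [Finset.mul_sum]
      refine Finset.sum_congr rfl fun x _ => ?_
      have hnb : ∑ y ∈ G.neighborFinset x, (c * ψ y - c * ψ x)
          = c * ∑ y ∈ G.neighborFinset x, (ψ y - ψ x) := by
        rw [Finset.mul_sum]
        exact Finset.sum_congr rfl fun y _ => by ring
      rw [hnb]; ring
    have hnorm : ∑ x ∈ Λ, (c * ψ x) ^ 2 = 1 := by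
      have : ∑ x ∈ Λ, (c * ψ x) ^ 2 = c ^ 2 * S := by
        rw [hS, Finset.mul_sum]
        exact Finset.sum_congr rfl fun x _ => by ring
      rw [this, hc2, inv_mul_cancel₀ hSpos.ne']
    have hmem : quadForm G ξ Λ (fun x => c * ψ x) ≤ lamSup G ξ Λ := by
      apply le_csSup (bddAbove_quad G ξ Λ)
      exact ⟨fun x => c * ψ x, fun x hx => by simp [h0 x hx], hnorm, rfl⟩
    rw [hscale, hc2] at hmem
    have := mul_le_mul_of_nonneg_left hmem hSpos.le
    calc quadForm G ξ Λ ψ = S * (S⁻¹ * quadForm G ξ Λ ψ) := by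
          field_simp
      _ ≤ S * lamSup G ξ Λ := this
      _ = lamSup G ξ Λ * S := mul_comm _ _

/-- resolvent mass bound. If `u` solves `(Δ_G + ξ − γ)u = 0` on `Λ` with
`u = 1` on `Λᶜ` (the Feynman–Kac function `u(x) = E_x[exp(∫_0^{τ_{Λᶜ}}(ξ(X_s) − γ)ds)]`),
`ξ − γ ≤ K` on `Λ` with `K ≥ 0`, and `γ > λ_Λ`, then `u ≤ 1 + K|Λ|/(γ − λ_Λ)` on `Λ`. -/
theorem resolvent_mass_bound {V : Type*} (G : SimpleGraph V)
    [∀ v, Fintype (G.neighborSet v)]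
    (Λ : Finset V) (hΛ : Λ.Nonempty) (ξ : V → ℝ) (γ K : ℝ) (hK : 0 ≤ K)
    (hξK : ∀ x ∈ Λ, ξ x - γ ≤ K) (hγ : lamSup G ξ Λ < γ)
    (u : V → ℝ)
    (hu : ∀ x ∈ Λ, (∑ y ∈ G.neighborFinset x, (u y - u x)) + (ξ x - γ) * u x = 0)
    (hub : ∀ x ∉ Λ, u x = 1) :
    ∀ x ∈ Λ, u x ≤ 1 + K * (Λ.card : ℝ) / (γ - lamSup G ξ Λ) := by
  set lam := lamSup G ξ Λ with hlamdef
  set v : V → ℝ := fun y => u y - 1 with hvdef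
  set p : V → ℝ := fun y => max (v y) 0 with hpdef
  set q : V → ℝ := fun y => max (-v y) 0 with hqdef
  have hv0 : ∀ y ∉ Λ, v y = 0 := fun y hy => by simp [hvdef, hub y hy]
  have hp0 : ∀ y ∉ Λ, p y = 0 := fun y hy => by simp [hpdef, hv0 y hy]
  have hpnn : ∀ y, 0 ≤ p y := fun y => le_max_right _ _
  have hqnn : ∀ y, 0 ≤ q y := fun y => le_max_right _ _
  have hvpq : ∀ y, v y = p y - q y := by
    intro y
    simp only [hpdef, hqdef]
    rcases le_total (v y) 0 with h | h
    · rw [max_eq_right h, max_eq_left (by linarith)]; ring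
    · rw [max_eq_left h, max_eq_right (by linarith)]; ring
  have hpq : ∀ y, p y * q y = 0 := by
    intro y
    simp only [hpdef, hqdef]
    rcases le_total (v y) 0 with h | h
    · rw [max_eq_right h]; ring
    · rw [max_eq_right (a := -v y) (by linarith)]; ring
  have hvlep : ∀ y, v y ≤ p y := fun y => le_max_left _ _
  set S : ℝ := ∑ y ∈ Λ, (p y) ^ 2 with hSdef
  have hSnn : 0 ≤ S := Finset.sum_nonneg fun i _ => sq_nonneg _
  have hpS : ∀ y ∈ Λ, p y ≤ Real.sqrt S := by
    intro y hy
    have h2 : (p y) ^ 2 ≤ S := hSdef ▸ Finset.single_le_sum (fun i _ => sq_nonneg (p i)) hy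
    calc p y = Real.sqrt ((p y) ^ 2) := (Real.sqrt_sq (hpnn y)).symm
      _ ≤ Real.sqrt S := Real.sqrt_le_sqrt h2
  have heq : ∀ x ∈ Λ, (γ - ξ x) * v x - ∑ y ∈ G.neighborFinset x, (v y - v x) = ξ x - γ := by
    intro x hx
    have h := hu x hx
    have hsum : ∑ y ∈ G.neighborFinset x, (u y - u x) = ∑ y ∈ G.neighborFinset x, (v y - v x) :=
      Finset.sum_congr rfl fun y _ => by simp only [hvdef]; ring
    have hux : u x = v x + 1 := by simp [hvdef]
    rw [hsum, hux] at h
    nlinarith [h]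
  have hsplit : ∀ x, ∑ y ∈ G.neighborFinset x, (v y - v x)
      = (∑ y ∈ G.neighborFinset x, (p y - p x)) - (∑ y ∈ G.neighborFinset x, q y)
        + ((G.neighborFinset x).card : ℝ) * q x := by
    intro x
    have hcong : ∀ y ∈ G.neighborFinset x, v y - v x = ((p y - p x) - q y) + q x :=
      fun y _ => by rw [hvpq y, hvpq x]; ring
    rw [Finset.sum_congr rfl hcong, Finset.sum_add_distrib, Finset.sum_sub_distrib,
      Finset.sum_const, nsmul_eq_mul]
  set T : ℝ := ∑ x ∈ Λ, ((γ - ξ x) * v x - ∑ y ∈ G.neighborFinset x, (v y - v x)) * p x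
    with hTdef
  have hT1 : T = ∑ x ∈ Λ, (ξ x - γ) * p x :=
    Finset.sum_congr rfl fun x hx => by rw [heq x hx]
  have hT2 : T ≤ K * (Λ.card : ℝ) * Real.sqrt S := by
    rw [hT1]
    calc ∑ x ∈ Λ, (ξ x - γ) * p x ≤ ∑ x ∈ Λ, K * Real.sqrt S := by
          refine Finset.sum_le_sum fun x hx => ?_
          calc (ξ x - γ) * p x ≤ K * p x := mul_le_mul_of_nonneg_right (hξK x hx) (hpnn x)
            _ ≤ K * Real.sqrt S := mul_le_mul_of_nonneg_left (hpS x hx) hK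
      _ = (Λ.card : ℝ) * (K * Real.sqrt S) := by rw [Finset.sum_const, nsmul_eq_mul]
      _ = K * (Λ.card : ℝ) * Real.sqrt S := by ring
  have key : ∀ x ∈ Λ, ((γ - ξ x) * v x - ∑ y ∈ G.neighborFinset x, (v y - v x)) * p x
      = (γ * p x ^ 2 - ((∑ y ∈ G.neighborFinset x, (p y - p x)) + ξ x * p x) * p x)
        + (∑ y ∈ G.neighborFinset x, q y) * p x := by
    intro x hx
    rw [hsplit x, hvpq x]
    have h1 := hpq x
    linear_combination (-(γ - ξ x) - ((G.neighborFinset x).card : ℝ)) * h1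
  have hTsplit : T = γ * S - quadForm G ξ Λ p + ∑ x ∈ Λ, (∑ y ∈ G.neighborFinset x, q y) * p x := by
    rw [hTdef, Finset.sum_congr rfl key, Finset.sum_add_distrib, Finset.sum_sub_distrib]
    have hγS : ∑ x ∈ Λ, γ * p x ^ 2 = γ * S := by rw [hSdef, Finset.mul_sum]
    rw [hγS]
    rfl
  have hquad : quadForm G ξ Λ p ≤ lam * S := quadForm_le G ξ Λ p hp0
  have hB : 0 ≤ ∑ x ∈ Λ, (∑ y ∈ G.neighborFinset x, q y) * p x :=
    Finset.sum_nonneg fun x _ =>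
      mul_nonneg (Finset.sum_nonneg fun y _ => hqnn y) (hpnn x)
  have hT3 : (γ - lam) * S ≤ T := by
    have hring : (γ - lam) * S = γ * S - lam * S := by ring
    rw [hTsplit, hring]
    linarith
  have hglam : 0 < γ - lam := by linarith
  have hchain : (γ - lam) * S ≤ K * (Λ.card : ℝ) * Real.sqrt S := le_trans hT3 hT2
  have hsqrt : Real.sqrt S ≤ K * (Λ.card : ℝ) / (γ - lam) := by
    rw [le_div_iff₀ hglam]
    rcases (Real.sqrt_nonneg S).eq_or_lt with h | h
    · rw [← h, zero_mul]
      exact mul_nonneg hK (Nat.cast_nonneg _)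
    · have hSs : S = Real.sqrt S * Real.sqrt S := (Real.mul_self_sqrt hSnn).symm
      rw [hSs] at hchain
      nlinarith [h]
  intro x hx
  have hvx : v x ≤ Real.sqrt S := le_trans (hvlep x) (hpS x hx)
  have hux : u x = 1 + v x := by simp [hvdef]
  linarith
end

section
/- Tail bound for generation sizes under exponential moments: let (Z_k) be a Galton–Watson process with Z_0 = 1, offspring mean μ = e^{ϑ} > 1, and suppose W = lim μ^{−k}Z_k satisfies E[e^{a_* W}] < ∞ for some a_* > 0 and the uniform martingale deviation bound P(|W_k − W| ≥ ε) ≤ C e^{−c ε^{2/3} μ^{k/3}} holds for all ε > 0, k ∈ ℕ. Then for every δ > 0 there exist constants such that P(Σ_{k=0}^{R} Z_k ≥ e^{(1+δ)ϑR}) ≤ C₁(R+1) exp(−a_* e^{δϑR}/(2(R+1))) + C₂(R+1) exp(−c (e^{δϑR}/(2(R+1)))^{2/3}), which decays super-exponentially in R. -/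
open MeasureTheory ProbabilityTheory Finset

/-!
With `t = e^{δϑR} / (2(R+1))`, if `W < t` and every `W_k = e^{-ϑk} Z_k` (`k ≤ R`) is within `t`
of `W`, then `Z_k < 2t e^{ϑk} ≤ 2t e^{ϑR}`, so `Σ_{k ≤ R} Z_k < 2t(R+1)e^{ϑR} = e^{(1+δ)ϑR}`.
Hence the event of the theorem is covered by `{t ≤ W}` and the `R + 1` deviation events
`{t ≤ |W_k - W|}`: the first is bounded by the exponential Markov inequality, the others by the
deviation hypothesis, where the factor `e^{ϑk/3} ≥ 1` may be dropped.
-/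

lemma le_or_exists_le_abs_of_le_sum {ϑ w t : ℝ} {x : ℕ → ℝ} {R : ℕ} (hϑ : 0 ≤ ϑ)
    (h : (R + 1) * (2 * t * Real.exp (ϑ * R)) ≤ ∑ k ∈ range (R + 1), x k) :
    t ≤ w ∨ ∃ k ∈ range (R + 1), t ≤ |Real.exp (-(ϑ * k)) * x k - w| := by
  by_contra! ⟨hw, hclose⟩
  have ht : 0 < t := (abs_nonneg _).trans_lt (hclose 0 (by simp))
  have hx : ∀ k ∈ range (R + 1), x k < 2 * t * Real.exp (ϑ * R) := by
    intro k hk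
    have hkR : (k : ℝ) ≤ R := by exact_mod_cast Nat.lt_succ_iff.mp (mem_range.mp hk)
    have hscaled : Real.exp (-(ϑ * k)) * x k < 2 * t := by
      linarith [(abs_lt.mp (hclose k hk)).2]
    calc x k = Real.exp (ϑ * k) * (Real.exp (-(ϑ * k)) * x k) := by
          rw [← mul_assoc, ← Real.exp_add, add_neg_cancel, Real.exp_zero, one_mul]
      _ < Real.exp (ϑ * k) * (2 * t) := mul_lt_mul_of_pos_left hscaled (Real.exp_pos _)
      _ ≤ Real.exp (ϑ * R) * (2 * t) := by gcongr
      _ = 2 * t * Real.exp (ϑ * R) := mul_comm _ _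
  have hsum := sum_lt_sum_of_nonempty nonempty_range_add_one hx
  rw [sum_const, card_range, nsmul_eq_mul, Nat.cast_add_one] at hsum
  linarith

lemma setOf_le_sum_subset_union_biUnion {Ω : Type*} {ϑ t : ℝ} {x : ℕ → Ω → ℝ} {w : Ω → ℝ}
    {R : ℕ} (hϑ : 0 ≤ ϑ) :
    {ω | (R + 1) * (2 * t * Real.exp (ϑ * R)) ≤ ∑ k ∈ range (R + 1), x k ω} ⊆
      {ω | t ≤ w ω} ∪ ⋃ k ∈ range (R + 1), {ω | t ≤ |Real.exp (-(ϑ * k)) * x k ω - w ω|} := by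
  intro ω hω
  simpa using le_or_exists_le_abs_of_le_sum hϑ hω

lemma measureReal_le_of_subset_union_biUnion {α ι : Type*} [MeasurableSpace α]
    {μ : Measure α} [IsFiniteMeasure μ] {s t : Set α} {I : Finset ι} {u : ι → Set α} {a b : ℝ}
    (h : s ⊆ t ∪ ⋃ i ∈ I, u i) (ht : μ.real t ≤ a) (hu : ∀ i ∈ I, μ.real (u i) ≤ b) :
    μ.real s ≤ a + #I * b :=
  calc μ.real s ≤ μ.real (t ∪ ⋃ i ∈ I, u i) := measureReal_mono h
    _ ≤ μ.real t + μ.real (⋃ i ∈ I, u i) := measureReal_union_le _ _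
    _ ≤ μ.real t + ∑ i ∈ I, μ.real (u i) := by gcongr; exact measureReal_biUnion_finset_le _ _
    _ ≤ a + #I * b := by
      rw [← nsmul_eq_mul, ← sum_const]
      gcongr with i hi
      exact hu i hi

theorem generation_size_tail_general {Ω : Type*} [MeasureSpace Ω]
    [IsProbabilityMeasure (ℙ : Measure Ω)]
    (Z : ℕ → Ω → ℕ)
    (ϑ : ℝ) (hϑ : 0 < ϑ)
    (W : Ω → ℝ)
    (astar C c : ℝ) (hastar : 0 < astar) (hC : 0 < C) (hc : 0 < c)
    (hint : Integrable (fun ω => Real.exp (astar * W ω)))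
    (hdev : ∀ ε > (0 : ℝ), ∀ k : ℕ,
      (ℙ {ω | ε ≤ |Real.exp (-(ϑ * k)) * (Z k ω : ℝ) - W ω|}).toReal ≤
        C * Real.exp (-(c * ε ^ ((2 : ℝ) / 3) * Real.exp (ϑ * k / 3))))
    (δ : ℝ) :
    ∃ C₁ > 0, ∃ C₂ > 0, ∀ R : ℕ,
      (ℙ {ω | Real.exp ((1 + δ) * ϑ * R) ≤ ∑ k ∈ range (R + 1), (Z k ω : ℝ)}).toReal ≤
        C₁ * (R + 1) * Real.exp (-(astar * Real.exp (δ * ϑ * R) / (2 * (R + 1)))) +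
        C₂ * (R + 1) *
          Real.exp (-(c * (Real.exp (δ * ϑ * R) / (2 * (R + 1))) ^ ((2 : ℝ) / 3))) := by
  have hmgf : 0 ≤ mgf W ℙ astar := mgf_nonneg
  refine ⟨mgf W ℙ astar + 1, by linarith, C, hC, fun R => ?_⟩
  set t := Real.exp (δ * ϑ * R) / (2 * (R + 1)) with ht_def
  have ht : 0 < t := by positivity
  have hthreshold : (R + 1) * (2 * t * Real.exp (ϑ * R)) = Real.exp ((1 + δ) * ϑ * R) := by
    rw [ht_def, show (1 + δ) * ϑ * R = ϑ * R + δ * ϑ * R by ring, Real.exp_add]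
    field_simp
  have hmarkov : (ℙ {ω | t ≤ W ω}).toReal ≤ Real.exp (-(astar * t)) * mgf W ℙ astar :=
    (measure_ge_le_exp_mul_mgf t hastar.le hint).trans_eq (by rw [neg_mul])
  have hdeviation : ∀ k ∈ range (R + 1),
      (ℙ {ω | t ≤ |Real.exp (-(ϑ * k)) * (Z k ω : ℝ) - W ω|}).toReal ≤
        C * Real.exp (-(c * t ^ ((2 : ℝ) / 3))) := by
    intro k _
    refine (hdev t ht k).trans ?_
    gcongr C * Real.exp (-?_)
    exact le_mul_of_one_le_right (by positivity) (Real.one_le_exp (by positivity))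
  have htail := measureReal_le_of_subset_union_biUnion
    (hthreshold ▸ setOf_le_sum_subset_union_biUnion hϑ.le) hmarkov hdeviation
  rw [card_range, Nat.cast_add_one] at htail
  have hmgf_le : mgf W ℙ astar ≤ (mgf W ℙ astar + 1) * (R + 1) := by
    nlinarith [R.cast_nonneg (α := ℝ)]
  rw [mul_div_assoc, ← ht_def]
  refine htail.trans ?_
  nlinarith [Real.exp_pos (-(astar * t))]

/-- tail bound for generation sizes. For a supercritical Galton–Watson process
with `Z_0 = 1`, mean `μ = e^ϑ`, `W_k = μ^{−k}Z_k`, limit `W` with `E[e^{a_* W}] < ∞`, and the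
martingale deviation bound `P(|W_k − W| ≥ ε) ≤ C e^{−c ε^{2/3} μ^{k/3}}`, for every `δ > 0`
there are constants `C₁, C₂ > 0` with
`P(Σ_{k=0}^R Z_k ≥ e^{(1+δ)ϑR}) ≤ C₁(R+1)exp(−a_* e^{δϑR}/(2(R+1))) +
C₂(R+1)exp(−c(e^{δϑR}/(2(R+1)))^{2/3})`. -/
theorem generation_size_tail {Ω : Type*} [MeasureSpace Ω]
    [IsProbabilityMeasure (ℙ : Measure Ω)]
    (Z : ℕ → Ω → ℕ) (hZmeas : ∀ k, Measurable (Z k)) (hZ0 : ∀ ω, Z 0 ω = 1)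
    (ϑ : ℝ) (hϑ : 0 < ϑ)
    (W : Ω → ℝ) (hWmeas : Measurable W)
    (astar C c : ℝ) (hastar : 0 < astar) (hC : 0 < C) (hc : 0 < c)
    (hint : Integrable (fun ω => Real.exp (astar * W ω)))
    (hdev : ∀ ε > (0 : ℝ), ∀ k : ℕ,
      (ℙ {ω | ε ≤ |Real.exp (-(ϑ * k)) * (Z k ω : ℝ) - W ω|}).toReal ≤
        C * Real.exp (-(c * ε ^ ((2 : ℝ) / 3) * Real.exp (ϑ * k / 3))))
    (δ : ℝ) (hδ : 0 < δ) :
    ∃ C₁ > 0, ∃ C₂ > 0, ∀ R : ℕ,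
      (ℙ {ω | Real.exp ((1 + δ) * ϑ * R) ≤ ∑ k ∈ range (R + 1), (Z k ω : ℝ)}).toReal ≤
        C₁ * (R + 1) * Real.exp (-(astar * Real.exp (δ * ϑ * R) / (2 * (R + 1)))) +
        C₂ * (R + 1) *
          Real.exp (-(c * (Real.exp (δ * ϑ * R) / (2 * (R + 1))) ^ ((2 : ℝ) / 3))) :=
  generation_size_tail_general Z ϑ hϑ W astar C c hastar hC hc hint hdev δ
end

section
/- Asymptotics of the entropy–energy optimum: define F_t(r) = ρ log(ϑ r) − (r/t)[log(ερ log(ϑ r)) − δ_r log log r] for constants ρ, ϑ, ε > 0 and a differentiable function r ↦ δ_r with δ_r → 0 and r·(d/dr)δ_r → 0 as r → ∞. Then any maximizer r_t of F_t satisfies r_t = (1+o(1))·ρt/log log t as t → ∞, and sup_{r>0} F_t(r) ≤ ρ log(ϑ 𝔯_t) − ρ + o(1) with 𝔯_t = ρt/log log t. -/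
/-!
Write `g(r) = log(ερ log(ϑ r)) − δ_r log log r`, so that `F_t(r) = ρ log(ϑ r) − (r/t) g(r)` and
`g(r) ∼ log log r`. In the variable `u = r / 𝔯_t` one has
`F_t(r) = ρ log(ϑ 𝔯_t) + ρ (log u − u g(r) / log log t)`.
For `r ≥ t / log t` the ratio `g(r) / log log t` is at least `c` for any `c < 1` once `t` is large,
and `log u − c u ≤ −1 − log c` gives the upper bound; for `r ≤ t / log t` the entropy term alone is
`ρ log(ϑ 𝔯_t) − ρ log(ρ log t / log log t)`, far below it. At `r = 𝔯_t` the value is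
`ρ log(ϑ 𝔯_t) − ρ (1 + o(1))`, so a maximizer satisfies `c u − log u ≤ 1 + o(1)` for every `c < 1`,
which pins `u` to the unique minimum point `1` of `u − log u`.
-/

open Filter Real

/-- The entropy–energy trade-off function
`F_t(r) = ρ log(ϑ r) − (r/t)[log(ερ log(ϑ r)) − δ_r log log r]`. -/
noncomputable def Ffun (ρ ϑ ε : ℝ) (δ : ℝ → ℝ) (t r : ℝ) : ℝ :=
  ρ * Real.log (ϑ * r) -
    (r / t) * (Real.log (ε * ρ * Real.log (ϑ * r)) - δ r * Real.log (Real.log r))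

open Topology

lemma tendsto_log_log_atTop : Tendsto (fun t : ℝ => log (log t)) atTop atTop :=
  tendsto_log_atTop.comp tendsto_log_atTop

lemma tendsto_div_log_atTop : Tendsto (fun x : ℝ => x / log x) atTop atTop := by
  have h : Tendsto (fun x : ℝ => log x / x) atTop (𝓝[>] 0) :=
    tendsto_nhdsWithin_iff.2 ⟨isLittleO_log_id_atTop.tendsto_div_nhds_zero,
      ((tendsto_log_atTop.eventually_gt_atTop 0).and (eventually_gt_atTop 0)).mono
        fun x hx => div_pos hx.1 hx.2⟩
  simpa only [Pi.inv_def, inv_div] using h.inv_tendsto_nhdsGT_zero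

lemma tendsto_log_log_div_log : Tendsto (fun t : ℝ => log (log t) / log t) atTop (𝓝 0) :=
  isLittleO_log_id_atTop.tendsto_div_nhds_zero.comp tendsto_log_atTop

lemma tendsto_log_log_log_div_log :
    Tendsto (fun t : ℝ => log (log (log t)) / log t) atTop (𝓝 0) := by
  have h := (tendsto_log_log_div_log.comp tendsto_log_atTop).mul tendsto_log_log_div_log
  rw [mul_zero] at h
  refine h.congr' ?_
  filter_upwards [tendsto_log_log_atTop.eventually_gt_atTop 0] with t hL
  simp only [Function.comp_apply]
  field_simp

lemma tendsto_log_log_div_log_log {x : ℝ → ℝ}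
    (hx : Tendsto (fun t => log (x t) / log t) atTop (𝓝 1)) :
    Tendsto (fun t => log (log (x t)) / log (log t)) atTop (𝓝 1) := by
  have hlog : Tendsto (fun t => log (log (x t) / log t)) atTop (𝓝 0) := by
    simpa only [Function.comp_def, log_one] using (continuousAt_log one_ne_zero).tendsto.comp hx
  have h := (tendsto_const_nhds (x := (1 : ℝ))).add (hlog.div_atTop tendsto_log_log_atTop)
  rw [add_zero] at h
  refine h.congr' ?_
  filter_upwards [hx.eventually (eventually_gt_nhds one_pos), tendsto_log_atTop.eventually_gt_atTop 0,
    tendsto_log_log_atTop.eventually_gt_atTop 0] with t hq hlt hL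
  have hsplit : log (log (x t)) = log (log (x t) / log t) + log (log t) := by
    rw [← log_mul hq.ne' hlt.ne', div_mul_cancel₀ _ hlt.ne']
  rw [hsplit]
  field_simp
  ring

lemma tendsto_log_log_mul_div {c : ℝ} (hc : 0 < c) {y : ℝ → ℝ} (hy0 : ∀ᶠ t in atTop, 0 < y t)
    (hy : Tendsto (fun t => log (y t) / log t) atTop (𝓝 0)) :
    Tendsto (fun t => log (log (c * t / y t)) / log (log t)) atTop (𝓝 1) := by
  apply tendsto_log_log_div_log_log
  have h := ((tendsto_const_nhds (x := log c)).div_atTop tendsto_log_atTop).add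
    (tendsto_const_nhds (x := (1 : ℝ))) |>.sub hy
  rw [zero_add, sub_zero] at h
  refine h.congr' ?_
  filter_upwards [hy0, eventually_gt_atTop 0, tendsto_log_atTop.eventually_gt_atTop 0]
    with t hyt ht hlt
  rw [log_div (by positivity) hyt.ne', log_mul hc.ne' ht.ne']
  field_simp

lemma log_sub_mul_le {c x : ℝ} (hc : 0 < c) (hx : 0 < x) : log x - c * x ≤ -1 - log c := by
  have h := log_le_sub_one_of_pos (mul_pos hc hx)
  rw [log_mul hc.ne' hx.ne'] at h
  linarith

lemma mul_sub_log_le_mul_sub_log {c x y : ℝ} (hx : 0 < x) (hy : 0 < y)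
    (h : 0 ≤ (c - y⁻¹) * (x - y)) : c * y - log y ≤ c * x - log x := by
  have htangent := log_le_sub_one_of_pos (div_pos hx hy)
  rw [log_div hx.ne' hy.ne'] at htangent
  have hexpand : (c - y⁻¹) * (x - y) = c * x - c * y - (x / y - 1) := by
    field_simp
  linarith

lemma exists_abs_sub_one_lt_of_mul_sub_log_le {a : ℝ} (ha : 0 < a) :
    ∃ c ∈ Set.Ico (0 : ℝ) 1, ∀ x > 0, c * x - log x ≤ 2 - c → |x - 1| < a := by
  set a' := min a (1 / 2)
  have ha' : 0 < a' := lt_min ha one_half_pos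
  have ha'half : a' ≤ 1 / 2 := min_le_right _ _
  have hgap : ∀ y > 0, y ≠ 1 → 0 < y - log y - 1 := fun y hy hy1 => by
    linarith [log_lt_sub_one_of_pos hy hy1]
  set κ := min (1 + a' - log (1 + a') - 1) (1 - a' - log (1 - a') - 1)
  have hκ : 0 < κ := lt_min (hgap _ (by linarith) (by linarith)) (hgap _ (by linarith) (by linarith))
  set b := min (κ / 3) (a' / 2)
  have hb : 0 < b := lt_min (by positivity) (by positivity)
  have hbκ : b ≤ κ / 3 := min_le_left _ _
  have hba : b ≤ a' / 2 := min_le_right _ _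
  -- `x ↦ (1 - b) x - log x` is convex, so outside `(1 - a', 1 + a')` it is at least its value
  -- at `1 ± a'`, which exceeds `1 + b`
  have hend : ∀ y, 0 < y → y ≤ 3 / 2 → κ ≤ y - log y - 1 → 1 + b < (1 - b) * y - log y :=
    fun y _ hy hκy => by nlinarith
  refine ⟨1 - b, ⟨by linarith, by linarith⟩, fun x hx hψ => ?_⟩
  rw [abs_sub_lt_iff]
  constructor
  · by_contra! hxa
    have hy : 0 < 1 + a' := by linarith
    have hcoef : 0 ≤ 1 - b - (1 + a')⁻¹ := by
      have : (1 + a')⁻¹ ≤ 1 - a' / 2 := by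
        rw [inv_eq_one_div, div_le_iff₀ hy]
        nlinarith
      linarith
    have := mul_sub_log_le_mul_sub_log hx hy
      (mul_nonneg hcoef (by linarith [min_le_left a (1 / 2)]))
    linarith [hend _ hy (by linarith) (min_le_left _ _)]
  · by_contra! hxa
    have hy : 0 < 1 - a' := by linarith
    have hcoef : 1 - b - (1 - a')⁻¹ ≤ 0 := by
      have : 1 ≤ (1 - a')⁻¹ := one_le_inv₀ hy |>.2 (by linarith)
      linarith
    have := mul_sub_log_le_mul_sub_log hx hy
      (mul_nonneg_of_nonpos_of_nonpos hcoef (by linarith [min_le_left a (1 / 2)]))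
    linarith [hend _ hy (by linarith) (min_le_right _ _)]

lemma tendsto_one_of_mul_sub_log_le {α : Type*} {l : Filter α} {u G : α → ℝ}
    (hu : ∀ᶠ t in l, 0 < u t) (hG : Tendsto G l (𝓝 1))
    (h : ∀ c, 0 ≤ c → c < 1 → ∀ᶠ t in l, c * u t - log (u t) ≤ G t) :
    Tendsto u l (𝓝 1) := by
  refine Metric.tendsto_nhds.2 fun a ha => ?_
  obtain ⟨c, ⟨hc0, hc1⟩, hc⟩ := exists_abs_sub_one_lt_of_mul_sub_log_le ha
  filter_upwards [hu, h c hc0 hc1, hG.eventually (eventually_lt_nhds (by linarith : 1 < 2 - c))]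
    with t hut hcu hGt
  exact hc _ hut (hcu.trans hGt.le)

lemma exists_tendsto_zero_forall_le {α ι : Type*} {l : Filter α} {s : Set ι} {f : α → ι → ℝ}
    (h : ∀ a > 0, ∀ᶠ t in l, ∀ i ∈ s, f t i ≤ a) :
    ∃ e : α → ℝ, Tendsto e l (𝓝 0) ∧ ∀ᶠ t in l, ∀ i ∈ s, f t i ≤ e t := by
  refine ⟨fun t => max 0 (sSup (f t '' s)), ?_, ?_⟩
  · refine tendsto_order.2 ⟨fun a ha => Eventually.of_forall fun t => ha.trans_le (le_max_left _ _),
      fun a ha => ?_⟩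
    filter_upwards [h (a / 2) (by positivity)] with t ht
    have : max 0 (sSup (f t '' s)) ≤ a / 2 :=
      max_le (by positivity) (Real.sSup_le (by rintro _ ⟨i, hi, rfl⟩; exact ht i hi) (by positivity))
    linarith
  · filter_upwards [h 1 one_pos] with t ht i hi
    have hbdd : BddAbove (f t '' s) := ⟨1, by rintro _ ⟨j, hj, rfl⟩; exact ht j hj⟩
    exact (le_csSup hbdd ⟨i, hi, rfl⟩).trans (le_max_right _ _)

-- The scale `𝔯_t`.
noncomputable def optRadius (ρ t : ℝ) : ℝ := ρ * t / log (log t)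

lemma optRadius_pos {ρ t : ℝ} (hρ : 0 < ρ) (ht : 0 < t) (hL : 0 < log (log t)) :
    0 < optRadius ρ t := by
  unfold optRadius
  positivity

lemma tendsto_optRadius_div_atTop {ρ : ℝ} (hρ : 0 < ρ) :
    Tendsto (fun t => optRadius ρ t / (t / log t)) atTop atTop := by
  refine ((tendsto_div_log_atTop.comp tendsto_log_atTop).const_mul_atTop hρ).congr' ?_
  filter_upwards [eventually_gt_atTop 0, tendsto_log_atTop.eventually_gt_atTop 0] with t ht hlt
  simp only [Function.comp_apply, optRadius]
  field_simp

lemma tendsto_optRadius_atTop {ρ : ℝ} (hρ : 0 < ρ) : Tendsto (optRadius ρ) atTop atTop := by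
  refine ((tendsto_optRadius_div_atTop hρ).atTop_mul_atTop₀ tendsto_div_log_atTop).congr' ?_
  filter_upwards [tendsto_div_log_atTop.eventually_gt_atTop 0] with t ht
  exact div_mul_cancel₀ _ ht.ne'

lemma eventually_log_add_le_log_optRadius {ρ ϑ : ℝ} (hρ : 0 < ρ) (hϑ : 0 < ϑ) (K : ℝ) :
    ∀ᶠ t in atTop, log (ϑ * (t / log t)) + K ≤ log (ϑ * optRadius ρ t) := by
  filter_upwards [(tendsto_optRadius_div_atTop hρ).eventually_ge_atTop (exp K),
    tendsto_div_log_atTop.eventually_gt_atTop 0] with t hK hs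
  rw [← log_exp K, ← log_mul (by positivity) (exp_pos K).ne']
  refine log_le_log (by positivity) ?_
  rw [le_div_iff₀ hs] at hK
  nlinarith

lemma tendsto_log_log_optRadius_div {ρ : ℝ} (hρ : 0 < ρ) :
    Tendsto (fun t => log (log (optRadius ρ t)) / log (log t)) atTop (𝓝 1) :=
  tendsto_log_log_mul_div hρ (tendsto_log_log_atTop.eventually_gt_atTop 0)
    tendsto_log_log_log_div_log

lemma tendsto_log_log_div_log_div :
    Tendsto (fun t => log (log (t / log t)) / log (log t)) atTop (𝓝 1) := by
  simpa only [one_mul] using tendsto_log_log_mul_div one_pos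
    (tendsto_log_atTop.eventually_gt_atTop 0) tendsto_log_log_div_log

-- `Ffun ρ ϑ ε δ = tradeoff ρ ϑ g` holds by `rfl`, with `g` as above.
noncomputable def tradeoff (ρ ϑ : ℝ) (g : ℝ → ℝ) (t r : ℝ) : ℝ := ρ * log (ϑ * r) - r / t * g r

section Tradeoff

variable {ρ ϑ : ℝ} {g : ℝ → ℝ}

lemma tradeoff_le_of_le {t r x : ℝ} (hρ : 0 ≤ ρ) (hϑ : 0 < ϑ) (ht : 0 ≤ t) (hr : 0 < r)
    (hg : 0 ≤ g r) (hrx : r ≤ x) : tradeoff ρ ϑ g t r ≤ ρ * log (ϑ * x) := by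
  have hcost : 0 ≤ r / t * g r := by positivity
  have hlog : ρ * log (ϑ * r) ≤ ρ * log (ϑ * x) := by gcongr
  unfold tradeoff
  linarith

lemma tradeoff_le_log_optRadius {t r c : ℝ} (hρ : 0 < ρ) (hϑ : 0 < ϑ) (ht : 0 < t)
    (hL : 0 < log (log t)) (hr : 0 < r) (hg : c * log (log t) ≤ g r) :
    tradeoff ρ ϑ g t r ≤
      ρ * log (ϑ * optRadius ρ t) + ρ * (log (r / optRadius ρ t) - c * (r / optRadius ρ t)) := by
  have h𝔯 := optRadius_pos hρ ht hL
  have hlog : log (ϑ * r) = log (ϑ * optRadius ρ t) + log (r / optRadius ρ t) := by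
    rw [← log_mul (by positivity) (by positivity)]
    field_simp
  have hcost : r / t * (c * log (log t)) ≤ r / t * g r := by gcongr
  have hcost' : r / t * (c * log (log t)) = ρ * (c * (r / optRadius ρ t)) := by
    unfold optRadius
    field_simp
  unfold tradeoff
  rw [hlog]
  linarith

lemma tradeoff_optRadius {t : ℝ} (hρ : ρ ≠ 0) (ht : t ≠ 0) (hL : log (log t) ≠ 0) :
    tradeoff ρ ϑ g t (optRadius ρ t) =
      ρ * log (ϑ * optRadius ρ t) - ρ * (g (optRadius ρ t) / log (log t)) := by
  unfold tradeoff
  congr 1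
  unfold optRadius
  field_simp

lemma eventually_forall_mul_log_log_le (hg : Tendsto (fun r => g r / log (log r)) atTop (𝓝 1))
    {c : ℝ} (hc0 : 0 ≤ c) (hc1 : c < 1) :
    ∀ᶠ t in atTop, ∀ r ≥ t / log t, c * log (log t) ≤ g r := by
  set c' := (1 + c) / 2 with hc'def
  have hc' : c' < 1 := by linarith
  have hc'0 : 0 ≤ c' := by linarith
  have hcc : c ≤ c' * c' := by nlinarith [sq_nonneg (1 - c)]
  obtain ⟨N, hN⟩ := ((hg.eventually (eventually_gt_nhds hc')).and
    (tendsto_log_log_atTop.eventually_gt_atTop 0)).exists_forall_of_atTop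
  filter_upwards [tendsto_div_log_atTop.eventually_ge_atTop N,
    tendsto_div_log_atTop.eventually_gt_atTop 1,
    tendsto_log_log_div_log_div.eventually (eventually_gt_nhds hc'),
    tendsto_log_log_atTop.eventually_gt_atTop 0] with t hsN hs1 hss hL r hr
  obtain ⟨hgr, hLr⟩ := hN r (hsN.trans hr)
  have hgr' : c' * log (log r) < g r := (lt_div_iff₀ hLr).1 hgr
  have hss' : c' * log (log t) < log (log (t / log t)) := (lt_div_iff₀ hL).1 hss
  have hmono : log (log (t / log t)) ≤ log (log r) :=
    log_le_log (log_pos hs1) (log_le_log (by linarith) hr)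
  calc c * log (log t) ≤ c' * (c' * log (log t)) := by rw [← mul_assoc]; gcongr
    _ ≤ c' * log (log r) := by gcongr; linarith
    _ ≤ g r := hgr'.le

lemma tendsto_cost_optRadius_div (hρ : 0 < ρ)
    (hg : Tendsto (fun r => g r / log (log r)) atTop (𝓝 1)) :
    Tendsto (fun t => g (optRadius ρ t) / log (log t)) atTop (𝓝 1) := by
  have h := (hg.comp (tendsto_optRadius_atTop hρ)).mul (tendsto_log_log_optRadius_div hρ)
  rw [one_mul] at h
  refine h.congr' ?_
  filter_upwards [(tendsto_log_log_atTop.comp (tendsto_optRadius_atTop hρ)).eventually_gt_atTop 0]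
    with t hL
  simp only [Function.comp_apply] at hL ⊢
  field_simp

lemma eventually_tradeoff_le (hρ : 0 < ρ) (hϑ : 0 < ϑ)
    (hg : Tendsto (fun r => g r / log (log r)) atTop (𝓝 1)) {r₀ : ℝ}
    (hr₀ : ∀ r ≥ r₀, 0 < r ∧ 0 ≤ g r) {a : ℝ} (ha : 0 < a) :
    ∀ᶠ t in atTop, ∀ r ≥ r₀, tradeoff ρ ϑ g t r ≤ ρ * log (ϑ * optRadius ρ t) - ρ + a := by
  set c := exp (-(a / ρ))
  have hc0 : 0 < c := exp_pos _
  have hc1 : c < 1 := exp_lt_one_iff.2 (by simp only [neg_lt_zero]; positivity)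
  filter_upwards [eventually_forall_mul_log_log_le hg hc0.le hc1,
    eventually_log_add_le_log_optRadius hρ hϑ 1, eventually_gt_atTop 0,
    tendsto_log_log_atTop.eventually_gt_atTop 0] with t hfar hnear ht hL r hr
  obtain ⟨hr0, hgr⟩ := hr₀ r hr
  rcases le_or_gt r (t / log t) with hrs | hrs
  · have := mul_le_mul_of_nonneg_left hnear hρ.le
    have := tradeoff_le_of_le hρ.le hϑ ht.le hr0 hgr hrs
    linarith
  · have hu : 0 < r / optRadius ρ t := div_pos hr0 (optRadius_pos hρ ht hL)
    calc tradeoff ρ ϑ g t r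
        ≤ ρ * log (ϑ * optRadius ρ t) + ρ * (log (r / optRadius ρ t) - c * (r / optRadius ρ t)) :=
          tradeoff_le_log_optRadius hρ hϑ ht hL hr0 (hfar r hrs.le)
      _ ≤ ρ * log (ϑ * optRadius ρ t) + ρ * (-1 - log c) := by
          gcongr _ + ρ * ?_
          exact log_sub_mul_le hc0 hu
      _ = ρ * log (ϑ * optRadius ρ t) - ρ + a := by
          rw [log_exp]
          field_simp
          ring

lemma exists_tendsto_zero_tradeoff_le (hρ : 0 < ρ) (hϑ : 0 < ϑ)
    (hg : Tendsto (fun r => g r / log (log r)) atTop (𝓝 1)) {r₀ : ℝ}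
    (hr₀ : ∀ r ≥ r₀, 0 < r ∧ 0 ≤ g r) :
    ∃ e : ℝ → ℝ, Tendsto e atTop (𝓝 0) ∧ ∀ᶠ t in atTop, ∀ r ≥ r₀,
      tradeoff ρ ϑ g t r ≤ ρ * log (ϑ * optRadius ρ t) - ρ + e t := by
  obtain ⟨e, he, hle⟩ := exists_tendsto_zero_forall_le (s := Set.Ici r₀)
    (f := fun t r => tradeoff ρ ϑ g t r - (ρ * log (ϑ * optRadius ρ t) - ρ)) fun a ha =>
      (eventually_tradeoff_le hρ hϑ hg hr₀ ha).mono fun t ht r hr => by linarith [ht r hr]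
  exact ⟨e, he, hle.mono fun t ht r hr => by linarith [ht r hr]⟩

section Maximizer

variable {r₀ : ℝ} {R : ℝ → ℝ}

lemma eventually_div_log_le_maximizer (hρ : 0 < ρ) (hϑ : 0 < ϑ)
    (hg : Tendsto (fun r => g r / log (log r)) atTop (𝓝 1)) (hr₀ : ∀ r ≥ r₀, 0 < r ∧ 0 ≤ g r)
    (hR : ∀ᶠ t in atTop, r₀ ≤ R t ∧ ∀ r ≥ r₀, tradeoff ρ ϑ g t r ≤ tradeoff ρ ϑ g t (R t)) :
    ∀ᶠ t in atTop, t / log t ≤ R t := by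
  filter_upwards [hR, eventually_log_add_le_log_optRadius hρ hϑ 2,
    (tendsto_optRadius_atTop hρ).eventually_ge_atTop r₀,
    (tendsto_cost_optRadius_div hρ hg).eventually (eventually_lt_nhds one_lt_two),
    eventually_gt_atTop 0, tendsto_log_log_atTop.eventually_gt_atTop 0]
    with t ⟨hRr₀, hmax⟩ hnear h𝔯 hG ht hL
  by_contra! hRs
  have hopt := hmax _ h𝔯
  rw [tradeoff_optRadius hρ.ne' ht.ne' hL.ne'] at hopt
  have hR := tradeoff_le_of_le hρ.le hϑ ht.le (hr₀ _ hRr₀).1 (hr₀ _ hRr₀).2 hRs.le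
  have := mul_le_mul_of_nonneg_left hnear hρ.le
  have := mul_lt_mul_of_pos_left hG hρ
  linarith

lemma tendsto_maximizer_div_optRadius (hρ : 0 < ρ) (hϑ : 0 < ϑ)
    (hg : Tendsto (fun r => g r / log (log r)) atTop (𝓝 1)) (hr₀ : ∀ r ≥ r₀, 0 < r ∧ 0 ≤ g r)
    (hR : ∀ᶠ t in atTop, r₀ ≤ R t ∧ ∀ r ≥ r₀, tradeoff ρ ϑ g t r ≤ tradeoff ρ ϑ g t (R t)) :
    Tendsto (fun t => R t / optRadius ρ t) atTop (𝓝 1) := by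
  refine tendsto_one_of_mul_sub_log_le ?_ (tendsto_cost_optRadius_div hρ hg) fun c hc0 hc1 => ?_
  · filter_upwards [hR, eventually_gt_atTop 0, tendsto_log_log_atTop.eventually_gt_atTop 0]
      with t hRt ht hL
    exact div_pos (hr₀ _ hRt.1).1 (optRadius_pos hρ ht hL)
  · filter_upwards [hR, eventually_div_log_le_maximizer hρ hϑ hg hr₀ hR,
      eventually_forall_mul_log_log_le hg hc0 hc1,
      (tendsto_optRadius_atTop hρ).eventually_ge_atTop r₀,
      eventually_gt_atTop 0, tendsto_log_log_atTop.eventually_gt_atTop 0]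
      with t ⟨hRr₀, hmax⟩ hsR hfar h𝔯 ht hL
    have hopt := hmax _ h𝔯
    rw [tradeoff_optRadius hρ.ne' ht.ne' hL.ne'] at hopt
    have hRle := tradeoff_le_log_optRadius hρ hϑ ht hL (hr₀ _ hRr₀).1 (hfar _ hsR)
    refine le_of_mul_le_mul_left ?_ hρ
    linarith

end Maximizer

end Tradeoff

lemma tendsto_log_mul_log_sub_mul_div_log_log {ρ ϑ ε : ℝ} (hρ : 0 < ρ) (hϑ : 0 < ϑ) (hε : 0 < ε)
    {δ : ℝ → ℝ} (hδ0 : Tendsto δ atTop (𝓝 0)) :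
    Tendsto (fun r => (log (ε * ρ * log (ϑ * r)) - δ r * log (log r)) / log (log r)) atTop
      (𝓝 1) := by
  have hϑr : Tendsto (fun r => log (log (ϑ * r)) / log (log r)) atTop (𝓝 1) := by
    simpa only [div_one, log_one, zero_div] using
      tendsto_log_log_mul_div hϑ (y := fun _ => 1) (by simp) (by simp)
  have h := (((tendsto_const_nhds (x := log (ε * ρ))).div_atTop tendsto_log_log_atTop).add
    hϑr).sub hδ0
  rw [zero_add, sub_zero] at h
  refine h.congr' ?_
  filter_upwards [tendsto_log_log_atTop.eventually_gt_atTop 0,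
    (tendsto_log_atTop.comp (tendsto_id.const_mul_atTop hϑ)).eventually_gt_atTop 0] with r hL hϑL
  simp only [Function.comp_apply, id] at hϑL
  rw [log_mul (by positivity) hϑL.ne']
  field_simp

theorem entropy_energy_optimum_general (ρ ϑ ε : ℝ) (hρ : 0 < ρ) (hϑ : 0 < ϑ) (hε : 0 < ε)
    (δ : ℝ → ℝ) (hδ0 : Tendsto δ atTop (nhds 0)) :
    ∃ r₀ : ℝ, 0 < r₀ ∧
      (∃ e : ℝ → ℝ, Tendsto e atTop (nhds 0) ∧
        ∀ᶠ t in atTop, ∀ r ≥ r₀,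
          Ffun ρ ϑ ε δ t r ≤
            ρ * Real.log (ϑ * (ρ * t / Real.log (Real.log t))) - ρ + e t) ∧
      (∀ R : ℝ → ℝ,
        (∀ᶠ t in atTop, r₀ ≤ R t ∧ ∀ r ≥ r₀, Ffun ρ ϑ ε δ t r ≤ Ffun ρ ϑ ε δ t (R t)) →
        Tendsto (fun t => R t / (ρ * t / Real.log (Real.log t))) atTop (nhds 1)) := by
  have hg := tendsto_log_mul_log_sub_mul_div_log_log hρ hϑ hε hδ0
  obtain ⟨r₀, hr₀⟩ := ((hg.eventually (eventually_gt_nhds one_pos)).and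
    ((tendsto_log_log_atTop.eventually_gt_atTop 0).and
      (eventually_gt_atTop 0))).exists_forall_of_atTop
  have hr₀' : ∀ r ≥ r₀, 0 < r ∧
      0 ≤ log (ε * ρ * log (ϑ * r)) - δ r * log (log r) := fun r hr =>
    ⟨(hr₀ r hr).2.2, (div_pos_iff_of_pos_right (hr₀ r hr).2.1).1 (hr₀ r hr).1 |>.le⟩
  exact ⟨r₀, (hr₀ r₀ le_rfl).2.2, exists_tendsto_zero_tradeoff_le hρ hϑ hg hr₀',
    fun R hR => tendsto_maximizer_div_optRadius hρ hϑ hg hr₀' hR⟩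

/-- asymptotics of the entropy–energy optimum. If `δ_r → 0` and
`r·(d/dr)δ_r → 0`, then (beyond a fixed threshold `r₀` making all logarithms meaningful)
`sup_r F_t(r) ≤ ρ log(ϑ𝔯_t) − ρ + o(1)` with `𝔯_t = ρt/log log t`, and any maximizer
`r_t` of `F_t` satisfies `r_t = (1+o(1))·𝔯_t` as `t → ∞`. -/
theorem entropy_energy_optimum (ρ ϑ ε : ℝ) (hρ : 0 < ρ) (hϑ : 0 < ϑ) (hε : 0 < ε)
    (δ : ℝ → ℝ) (hdiff : Differentiable ℝ δ)
    (hδ0 : Tendsto δ atTop (nhds 0))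
    (hδ'0 : Tendsto (fun r => r * deriv δ r) atTop (nhds 0)) :
    ∃ r₀ : ℝ, 0 < r₀ ∧
      (∃ e : ℝ → ℝ, Tendsto e atTop (nhds 0) ∧
        ∀ᶠ t in atTop, ∀ r ≥ r₀,
          Ffun ρ ϑ ε δ t r ≤
            ρ * Real.log (ϑ * (ρ * t / Real.log (Real.log t))) - ρ + e t) ∧
      (∀ R : ℝ → ℝ,
        (∀ᶠ t in atTop, r₀ ≤ R t ∧ ∀ r ≥ r₀, Ffun ρ ϑ ε δ t r ≤ Ffun ρ ϑ ε δ t (R t)) →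
        Tendsto (fun t => R t / (ρ * t / Real.log (Real.log t))) atTop (nhds 1)) :=
  entropy_energy_optimum_general ρ ϑ ε hρ hϑ hε δ hδ0
end
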